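/- For every u ∈ W', every d ∈ W, and every λ ∈ V_ℂ such that α̂(λ) ≠ 0 and ρ(α̂(λ)) ≠ 0 for every coroot α̂ ∈ R̂, the following identity holds: c'(udλ) · r(udλ)/r(λ) = ∏_{α̂ ∈ d⁻¹(R̂(u))} (α̂(λ) − 1)/α̂(λ) · ∏_{β̂ ∈ d⁻¹(R̂'_+ ∖ R̂(u))} (β̂(λ) + 1)/β̂(λ) · ∏_{γ̂ ∈ R̂(ud)} ρ(γ̂(λ) + 1)/ρ(γ̂(λ)). (Here for u ∈ W' the inversion set R̂(u) is automatically contained in R̂'_+.) -/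

import Mathlib

/-!
Put `w = ud`. Since `W` acts by isometries, `α̂(wλ) = (w⁻¹α)^(λ)`, and as `α` runs through a
`W`-stable set of positive roots, `w⁻¹α` runs through the same set up to sign, the sign being
negative exactly on the inversion set. For `r(wλ)/r(λ)` the unchanged factors cancel and the
flipped ones give `ρ(-α̂(λ)) = ρ(α̂(λ) + 1)`. For `c'(udλ)` one uses that `u ∈ W'` permutes
`R' = R'₊ ∪ -R'₊`, so the factors over `R'₊` become those over `d⁻¹R'₊`, with
`(x + 1)/x` turned into `(x - 1)/x` exactly on `d⁻¹R̂(u)`. That `R̂(u) ⊆ R'₊` holds because a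
reflection in a root of `R'` does not change the height of a root in the simple roots outside
`J`, so it keeps positive roots outside `R'` positive.
-/

open scoped RealInnerProductSpace Classical

/-- A reduced crystallographic root system in `V = EuclideanSpace ℝ (Fin n)`, with a fixed
positive system and base `Δ` of simple roots.  `W` acts on `V`, hence on coroots, and is
extended complex-linearly to the complexification `V_ℂ = Fin n → ℂ`. -/
structure RootData (n : ℕ) where
  roots : Finset (EuclideanSpace ℝ (Fin n))
  pos : Finset (EuclideanSpace ℝ (Fin n))
  simples : Finset (EuclideanSpace ℝ (Fin n))
  pos_subset : pos ⊆ roots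
  simples_subset : simples ⊆ pos
  ne_zero : ∀ a ∈ roots, a ≠ 0
  union_eq : roots = pos ∪ pos.image (fun a => -a)
  pos_neg_disj : ∀ a ∈ pos, -a ∉ pos
  reduced : ∀ a ∈ roots, ∀ t : ℝ, t • a ∈ roots → t = 1 ∨ t = -1
  crystallographic : ∀ a ∈ roots, ∀ b ∈ roots, ∃ k : ℤ, 2 * ⟪a, b⟫ / ⟪a, a⟫ = (k : ℝ)
  refl_mem : ∀ a ∈ roots, ∀ b ∈ roots, b - (2 * ⟪a, b⟫ / ⟪a, a⟫) • a ∈ roots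
  simples_indep : LinearIndependent ℝ (fun a : {x // x ∈ simples} => (a : EuclideanSpace ℝ (Fin n)))
  pos_comb : ∀ b ∈ pos, ∃ c : EuclideanSpace ℝ (Fin n) → ℕ, b = ∑ a ∈ simples, (c a : ℝ) • a

namespace RootData

variable {n : ℕ}

/-- The Weyl group `W`, generated by the orthogonal reflections in the roots. -/
noncomputable def weyl (S : RootData n) :
    Subgroup (EuclideanSpace ℝ (Fin n) ≃ₗ[ℝ] EuclideanSpace ℝ (Fin n)) :=
  Subgroup.closure {g | ∃ a ∈ S.roots, ∀ v, g v = v - (2 * ⟪a, v⟫ / ⟪a, a⟫) • a}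

/-- The coroot `α̂ := 2α/(α,α)` of a root `α`. -/
noncomputable def co (a : EuclideanSpace ℝ (Fin n)) : EuclideanSpace ℝ (Fin n) :=
  (2 / ⟪a, a⟫) • a

/-- Evaluation of a coroot (as a linear functional via the inner product), extended
`ℂ`-linearly to the complexification `V_ℂ = Fin n → ℂ`. -/
noncomputable def ev (a : EuclideanSpace ℝ (Fin n)) (l : Fin n → ℂ) : ℂ :=
  ∑ i, (a i : ℂ) * l i

/-- The `ℂ`-linear extension of `w : V ≃ₗ[ℝ] V` to the complexification `V_ℂ`. -/
noncomputable def cpx (w : EuclideanSpace ℝ (Fin n) ≃ₗ[ℝ] EuclideanSpace ℝ (Fin n))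
    (l : Fin n → ℂ) : Fin n → ℂ :=
  fun i => ∑ j, ((w (EuclideanSpace.single j 1)) i : ℂ) * l j

/-- The inversion set `R̂(w) = {α̂ ∈ R̂₊ : w(α̂) ∈ R̂₋}` (indexed by the positive roots
`α` with `w(α)` negative, which correspond bijectively to the coroots in question). -/
noncomputable def invSet (S : RootData n)
    (w : EuclideanSpace ℝ (Fin n) ≃ₗ[ℝ] EuclideanSpace ℝ (Fin n)) :
    Finset (EuclideanSpace ℝ (Fin n)) :=
  S.pos.filter fun a => w a ∈ S.pos.image (fun b => -b)

/-- `r(λ) := ∏_{α ∈ R₊} ρ(α̂(λ))`. -/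
noncomputable def rfun (S : RootData n) (ρ : ℂ → ℂ) (l : Fin n → ℂ) : ℂ :=
  ∏ a ∈ S.pos, ρ (ev (co a) l)

/-- The standard Levi subsystem `R'` determined by a subset `J ⊆ Δ`: the roots lying in the
span of `J`. -/
noncomputable def leviRoots (S : RootData n) (J : Finset (EuclideanSpace ℝ (Fin n))) :
    Finset (EuclideanSpace ℝ (Fin n)) :=
  S.roots.filter fun b => b ∈ Submodule.span ℝ (J : Set (EuclideanSpace ℝ (Fin n)))

/-- `R'₊`, the positive part of the standard Levi subsystem. -/
noncomputable def leviPos (S : RootData n) (J : Finset (EuclideanSpace ℝ (Fin n))) :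
    Finset (EuclideanSpace ℝ (Fin n)) :=
  S.pos ∩ leviRoots S J

/-- The Weyl group `W'` of the standard Levi subsystem. -/
noncomputable def leviWeyl (S : RootData n) (J : Finset (EuclideanSpace ℝ (Fin n))) :
    Subgroup (EuclideanSpace ℝ (Fin n) ≃ₗ[ℝ] EuclideanSpace ℝ (Fin n)) :=
  Subgroup.closure {g | ∃ a ∈ leviRoots S J, ∀ v, g v = v - (2 * ⟪a, v⟫ / ⟪a, a⟫) • a}

/-- `c'(λ) := ∏_{α ∈ R'₊} (α̂(λ) + 1)/α̂(λ)`. -/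
noncomputable def cfunLevi (S : RootData n) (J : Finset (EuclideanSpace ℝ (Fin n)))
    (l : Fin n → ℂ) : ℂ :=
  ∏ a ∈ leviPos S J, (ev (co a) l + 1) / ev (co a) l

end RootData

section Reindexing

variable {R M N : Type*} [Semiring R] [AddCommGroup M] [Module R M] [DecidableEq M]
  [CommMonoid N]

lemma Finset.prod_comp_symm_eq_prod_sdiff_mul_prod_neg {T I : Finset M} (w : M ≃ₗ[R] M)
    (hT : ∀ a ∈ T, -a ∉ T)
    (hw : ∀ a ∈ T, w a ∈ T ∨ -w a ∈ T) (hw' : ∀ a ∈ T, w.symm a ∈ T ∨ -w.symm a ∈ T)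
    (hI : T.filter (fun a => w a ∉ T) = I) (F : M → N) :
    ∏ a ∈ T, F (w.symm a) = (∏ a ∈ T \ I, F a) * ∏ a ∈ I, F (-a) := by
  have key : ∏ a ∈ T, F (w.symm a) = ∏ b ∈ T, if w b ∈ T then F b else F (-b) := by
    refine Finset.prod_nbij' (fun a => if w.symm a ∈ T then w.symm a else -w.symm a)
      (fun b => if w b ∈ T then w b else -w b) ?_ ?_ ?_ ?_ ?_
    · intro a ha
      split_ifs with h
      exacts [h, (hw' a ha).resolve_left h]
    · intro b hb
      split_ifs with h
      exacts [h, (hw b hb).resolve_left h]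
    · intro a ha
      by_cases h : w.symm a ∈ T <;> simp [h, ha, hT a ha]
    · intro b hb
      by_cases h : w b ∈ T <;> simp [h, hb, hT b hb]
    · intro a ha
      by_cases h : w.symm a ∈ T <;> simp [h, ha, hT a ha]
  have hTI : T.filter (fun a => w a ∈ T) = T \ I := by
    rw [← hI]
    grind
  rw [key, Finset.prod_ite, hTI, hI]

end Reindexing

lemma LinearIndependent.exists_linearMap_apply_eq {ι K V : Type*} [Field K] [AddCommGroup V]
    [Module K V] {v : ι → V} (hv : LinearIndependent K v) (g : ι → K) :
    ∃ φ : V →ₗ[K] K, ∀ i, φ (v i) = g i := by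
  obtain ⟨φ, hφ⟩ := LinearMap.exists_extend (Finsupp.linearCombination K g ∘ₗ hv.repr)
  refine ⟨φ, fun i => ?_⟩
  have hvi := LinearMap.congr_fun hφ ⟨v i, Submodule.subset_span (Set.mem_range_self i)⟩
  rw [LinearMap.comp_apply, LinearMap.comp_apply, hv.repr_eq_single i _ rfl] at hvi
  simpa using hvi

namespace RootData

variable {n : ℕ}

section Reflections

variable {E : Type*} [NormedAddCommGroup E] [InnerProductSpace ℝ E]

noncomputable def reflect (a v : E) : E := v - (2 * ⟪a, v⟫ / ⟪a, a⟫) • a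

lemma inner_reflect_reflect (a v v' : E) : ⟪reflect a v, reflect a v'⟫ = ⟪v, v'⟫ := by
  by_cases ha : a = 0
  · simp [reflect, ha]
  have haa : ⟪a, a⟫ ≠ 0 := inner_self_ne_zero.mpr ha
  simp only [reflect, inner_sub_left, inner_sub_right, real_inner_smul_left,
    real_inner_smul_right, real_inner_comm v a, real_inner_comm v' a]
  field_simp
  ring

lemma reflect_reflect (a v : E) : reflect a (reflect a v) = v := by
  by_cases ha : a = 0
  · simp [reflect, ha]
  have haa : ⟪a, a⟫ ≠ 0 := inner_self_ne_zero.mpr ha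
  simp only [reflect, inner_sub_right, real_inner_smul_right]
  rw [sub_sub, ← add_smul]
  convert sub_zero v using 2
  rw [smul_eq_zero]
  left
  field_simp
  ring

lemma closure_reflect_induction {R : Set E} {P : (E ≃ₗ[ℝ] E) → Prop}
    (reflection : ∀ g : E ≃ₗ[ℝ] E, ∀ a ∈ R, (∀ v, g v = reflect a v) → P g)
    (one : P 1) (mul : ∀ x y, P x → P y → P (x * y)) {w : E ≃ₗ[ℝ] E}
    (hw : w ∈ Subgroup.closure {g | ∃ a ∈ R, ∀ v, g v = reflect a v}) : P w := by
  induction hw using Subgroup.closure_induction'' with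
  | mem g hg =>
    obtain ⟨a, ha, hg⟩ := hg
    exact reflection g a ha hg
  | inv_mem g hg =>
    obtain ⟨a, ha, hg⟩ := hg
    refine reflection g⁻¹ a ha fun v => g.symm_apply_eq.mpr ?_
    rw [hg, reflect_reflect]
  | one => exact one
  | mul x y _ _ hx hy => exact mul x y hx hy

end Reflections

variable {S : RootData n} {J : Finset (EuclideanSpace ℝ (Fin n))}

lemma inner_map_map_of_mem_weyl {w : EuclideanSpace ℝ (Fin n) ≃ₗ[ℝ] EuclideanSpace ℝ (Fin n)}
    (hw : w ∈ S.weyl) (v v' : EuclideanSpace ℝ (Fin n)) : ⟪w v, w v'⟫ = ⟪v, v'⟫ := by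
  refine closure_reflect_induction (P := fun w => ∀ v v', ⟪w v, w v'⟫ = ⟪v, v'⟫)
    (fun g a _ hg v v' => ?_) (fun _ _ => rfl) (fun x y hx hy v v' => (hx _ _).trans (hy _ _))
    hw v v'
  rw [hg, hg, inner_reflect_reflect]

lemma mapsTo_roots_of_mem_weyl {w : EuclideanSpace ℝ (Fin n) ≃ₗ[ℝ] EuclideanSpace ℝ (Fin n)}
    (hw : w ∈ S.weyl) : Set.MapsTo w S.roots S.roots := by
  refine closure_reflect_induction (P := fun w => Set.MapsTo w S.roots S.roots)
    (fun g a ha hg b hb => ?_) (fun _ hb => hb) (fun x y hx hy _ hb => hx (hy hb)) hw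
  rw [hg]
  exact S.refl_mem a ha b hb

lemma co_neg (a : EuclideanSpace ℝ (Fin n)) : co (-a) = -co a := by
  simp [co]

lemma ev_neg (b : EuclideanSpace ℝ (Fin n)) (l : Fin n → ℂ) : ev (-b) l = -ev b l := by
  simp [ev]

lemma co_map {w : EuclideanSpace ℝ (Fin n) ≃ₗ[ℝ] EuclideanSpace ℝ (Fin n)}
    (hw : ∀ v v', ⟪w v, w v'⟫ = ⟪v, v'⟫) (a : EuclideanSpace ℝ (Fin n)) :
    co (w a) = w (co a) := by
  rw [co, co, hw, map_smul]

lemma ev_cpx {w : EuclideanSpace ℝ (Fin n) ≃ₗ[ℝ] EuclideanSpace ℝ (Fin n)}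
    (hw : ∀ v v', ⟪w v, w v'⟫ = ⟪v, v'⟫) (b : EuclideanSpace ℝ (Fin n)) (l : Fin n → ℂ) :
    ev b (cpx w l) = ev (w.symm b) l := by
  have coord : ∀ j,
      ∑ i, (b i : ℂ) * (w (EuclideanSpace.single j 1) i : ℂ) = (w.symm b j : ℂ) := by
    intro j
    have : ⟪b, w (EuclideanSpace.single j 1)⟫ = w.symm b j := by
      rw [← w.apply_symm_apply b, hw, w.apply_symm_apply, EuclideanSpace.inner_single_right]
      simp
    rw [← this, PiLp.inner_apply]
    push_cast
    simp [mul_comm]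
  simp only [ev, cpx, Finset.mul_sum, ← mul_assoc]
  rw [Finset.sum_comm]
  simp only [← Finset.sum_mul, coord]

lemma ev_co_cpx {w : EuclideanSpace ℝ (Fin n) ≃ₗ[ℝ] EuclideanSpace ℝ (Fin n)}
    (hw : w ∈ S.weyl) (a : EuclideanSpace ℝ (Fin n)) (l : Fin n → ℂ) :
    ev (co a) (cpx w l) = ev (co (w.symm a)) l := by
  have hw' : ∀ v v', ⟪w.symm v, w.symm v'⟫ = ⟪v, v'⟫ := inner_map_map_of_mem_weyl (inv_mem hw)
  rw [ev_cpx (inner_map_map_of_mem_weyl hw), co_map hw']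

lemma mem_pos_or_neg_mem_pos {a : EuclideanSpace ℝ (Fin n)} (ha : a ∈ S.roots) :
    a ∈ S.pos ∨ -a ∈ S.pos := by
  rw [S.union_eq, Finset.mem_union, Finset.mem_image] at ha
  rcases ha with h | ⟨b, hb, rfl⟩
  exacts [Or.inl h, Or.inr ((neg_neg b).symm ▸ hb)]

lemma neg_mem_roots {a : EuclideanSpace ℝ (Fin n)} (ha : a ∈ S.roots) : -a ∈ S.roots := by
  rcases mem_pos_or_neg_mem_pos ha with h | h
  · rw [S.union_eq]
    exact Finset.mem_union_right _ (Finset.mem_image_of_mem _ h)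
  · exact S.pos_subset h

lemma mem_invSet_iff {w : EuclideanSpace ℝ (Fin n) ≃ₗ[ℝ] EuclideanSpace ℝ (Fin n)}
    (hw : Set.MapsTo w S.roots S.roots) {a : EuclideanSpace ℝ (Fin n)} (ha : a ∈ S.pos) :
    a ∈ invSet S w ↔ w a ∉ S.pos := by
  rw [invSet, Finset.mem_filter, Finset.mem_image]
  constructor
  · rintro ⟨-, b, hb, hba⟩ hpos
    exact S.pos_neg_disj _ hpos (hba ▸ (neg_neg b).symm ▸ hb)
  · intro hnot
    exact ⟨ha, -w a, (mem_pos_or_neg_mem_pos (hw (S.pos_subset ha))).resolve_left hnot,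
      neg_neg _⟩

lemma pos_filter_eq_invSet {w : EuclideanSpace ℝ (Fin n) ≃ₗ[ℝ] EuclideanSpace ℝ (Fin n)}
    (hw : Set.MapsTo w S.roots S.roots) : S.pos.filter (fun a => w a ∉ S.pos) = invSet S w := by
  ext a
  rw [Finset.mem_filter]
  constructor
  · rintro ⟨ha, h⟩
    exact (mem_invSet_iff hw ha).mpr h
  · intro h
    have ha : a ∈ S.pos := Finset.mem_of_mem_filter a h
    exact ⟨ha, (mem_invSet_iff hw ha).mp h⟩

lemma prod_pos_comp_symm {M : Type*} [CommMonoid M]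
    {w : EuclideanSpace ℝ (Fin n) ≃ₗ[ℝ] EuclideanSpace ℝ (Fin n)} (hw : w ∈ S.weyl)
    (F : EuclideanSpace ℝ (Fin n) → M) :
    ∏ a ∈ S.pos, F (w.symm a) = (∏ a ∈ S.pos \ invSet S w, F a) * ∏ a ∈ invSet S w, F (-a) :=
  Finset.prod_comp_symm_eq_prod_sdiff_mul_prod_neg w S.pos_neg_disj
    (fun _ ha => mem_pos_or_neg_mem_pos (mapsTo_roots_of_mem_weyl hw (S.pos_subset ha)))
    (fun _ ha => mem_pos_or_neg_mem_pos (mapsTo_roots_of_mem_weyl (inv_mem hw) (S.pos_subset ha)))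
    (pos_filter_eq_invSet (mapsTo_roots_of_mem_weyl hw)) F

lemma rfun_cpx_div_rfun {w : EuclideanSpace ℝ (Fin n) ≃ₗ[ℝ] EuclideanSpace ℝ (Fin n)}
    (hw : w ∈ S.weyl) {ρ : ℂ → ℂ} (hρ : ∀ s, ρ s = ρ (1 - s)) (l : Fin n → ℂ)
    (hρ0 : ∀ a ∈ S.pos, ρ (ev (co a) l) ≠ 0) :
    rfun S ρ (cpx w l) / rfun S ρ l =
      ∏ a ∈ invSet S w, ρ (ev (co a) l + 1) / ρ (ev (co a) l) := by
  have hsub : invSet S w ⊆ S.pos := Finset.filter_subset _ _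
  have hfixed : ∏ a ∈ S.pos \ invSet S w, ρ (ev (co a) l) ≠ 0 :=
    Finset.prod_ne_zero_iff.mpr fun a ha => hρ0 a (Finset.mem_sdiff.mp ha).1
  have hneg : ∀ a, ρ (ev (co (-a)) l) = ρ (ev (co a) l + 1) := fun a => by
    rw [co_neg, ev_neg, hρ, sub_neg_eq_add, add_comm]
  have hsplit : rfun S ρ l =
      (∏ a ∈ S.pos \ invSet S w, ρ (ev (co a) l)) * ∏ a ∈ invSet S w, ρ (ev (co a) l) :=
    (Finset.prod_sdiff hsub).symm
  have htwist : rfun S ρ (cpx w l) =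
      (∏ a ∈ S.pos \ invSet S w, ρ (ev (co a) l)) * ∏ a ∈ invSet S w, ρ (ev (co a) l + 1) := by
    simp only [rfun, ev_co_cpx hw]
    rw [prod_pos_comp_symm hw fun a => ρ (ev (co a) l)]
    simp only [hneg]
  rw [htwist, hsplit, mul_div_mul_left _ _ hfixed, Finset.prod_div_distrib]

lemma leviWeyl_le_weyl : leviWeyl S J ≤ S.weyl :=
  Subgroup.closure_mono fun _ ⟨a, ha, hg⟩ => ⟨a, (Finset.mem_filter.mp ha).1, hg⟩

lemma mapsTo_leviRoots_of_mem_leviWeyl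
    {u : EuclideanSpace ℝ (Fin n) ≃ₗ[ℝ] EuclideanSpace ℝ (Fin n)} (hu : u ∈ leviWeyl S J) :
    Set.MapsTo u (leviRoots S J) (leviRoots S J) := by
  refine closure_reflect_induction (P := fun u => Set.MapsTo u (leviRoots S J) (leviRoots S J))
    (fun g c hc hg b hb => ?_) (fun _ hb => hb) (fun x y hx hy _ hb => hx (hy hb)) hu
  obtain ⟨hcR, hcJ⟩ := Finset.mem_filter.mp hc
  obtain ⟨hbR, hbJ⟩ := Finset.mem_filter.mp hb
  rw [hg]
  exact Finset.mem_filter.mpr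
    ⟨S.refl_mem c hcR b hbR, Submodule.sub_mem _ hbJ (Submodule.smul_mem _ _ hcJ)⟩

/-- `φ` is the height of a root counted only in the simple roots outside `J`. -/
lemma exists_relativeHeight (hJ : J ⊆ S.simples) :
    ∃ φ : EuclideanSpace ℝ (Fin n) →ₗ[ℝ] ℝ,
      (∀ x ∈ Submodule.span ℝ (J : Set (EuclideanSpace ℝ (Fin n))), φ x = 0) ∧
      ∀ b ∈ S.pos,
        0 ≤ φ b ∧ (b ∉ Submodule.span ℝ (J : Set (EuclideanSpace ℝ (Fin n))) → 0 < φ b) := by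
  obtain ⟨φ, hφ⟩ := S.simples_indep.exists_linearMap_apply_eq
    fun s => if (s : EuclideanSpace ℝ (Fin n)) ∈ J then 0 else 1
  have hφs : ∀ s ∈ S.simples, φ s = if s ∈ J then 0 else 1 := fun s hs => hφ ⟨s, hs⟩
  refine ⟨φ, fun x hx => ?_, fun b hb => ?_⟩
  · refine Submodule.span_le (p := LinearMap.ker φ) |>.mpr (fun s hs => ?_) hx
    simp [hφs s (hJ hs), Finset.mem_coe.mp hs]
  obtain ⟨m, rfl⟩ := S.pos_comb b hb
  have hterm : ∀ s ∈ S.simples, 0 ≤ φ ((m s : ℝ) • s) := fun s hs => by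
    rw [map_smul, hφs s hs, smul_eq_mul]
    split_ifs <;> positivity
  refine ⟨by rw [map_sum]; exact Finset.sum_nonneg hterm, fun hnot => ?_⟩
  rw [map_sum]
  by_contra hle
  have hzero := (Finset.sum_eq_zero_iff_of_nonneg hterm).mp (le_antisymm (not_lt.mp hle)
    (Finset.sum_nonneg hterm))
  refine hnot (Submodule.sum_mem _ fun s hs => ?_)
  by_cases hsJ : s ∈ J
  · exact Submodule.smul_mem _ _ (Submodule.subset_span hsJ)
  · have := hzero s hs
    simp_all

lemma reflect_mem_pos_sdiff_leviRoots (hJ : J ⊆ S.simples) {c a : EuclideanSpace ℝ (Fin n)}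
    (hc : c ∈ leviRoots S J) (ha : a ∈ S.pos \ leviRoots S J) :
    reflect c a ∈ S.pos \ leviRoots S J := by
  obtain ⟨φ, hφJ, hφpos⟩ := exists_relativeHeight hJ
  obtain ⟨hcR, hcJ⟩ := Finset.mem_filter.mp hc
  obtain ⟨hap, haL⟩ := Finset.mem_sdiff.mp ha
  have hφa : 0 < φ a := (hφpos a hap).2 fun h => haL (Finset.mem_filter.mpr ⟨S.pos_subset hap, h⟩)
  have hφb : φ (reflect c a) = φ a := by simp [reflect, hφJ c hcJ]
  have hbR : reflect c a ∈ S.roots := S.refl_mem c hcR a (S.pos_subset hap)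
  refine Finset.mem_sdiff.mpr ⟨?_, fun h => ?_⟩
  · refine (mem_pos_or_neg_mem_pos hbR).resolve_right fun hneg => ?_
    have := (hφpos _ hneg).1
    rw [map_neg] at this
    linarith
  · have := hφJ _ (Finset.mem_filter.mp h).2
    linarith

lemma mapsTo_pos_sdiff_leviRoots_of_mem_leviWeyl (hJ : J ⊆ S.simples)
    {u : EuclideanSpace ℝ (Fin n) ≃ₗ[ℝ] EuclideanSpace ℝ (Fin n)} (hu : u ∈ leviWeyl S J) :
    Set.MapsTo u ↑(S.pos \ leviRoots S J) ↑(S.pos \ leviRoots S J) :=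
  closure_reflect_induction
    (P := fun u => Set.MapsTo u ↑(S.pos \ leviRoots S J) ↑(S.pos \ leviRoots S J))
    (fun _ _ hc hg b hb => (hg b).symm ▸ reflect_mem_pos_sdiff_leviRoots hJ hc hb)
    (fun _ hb => hb) (fun _ _ hx hy _ hb => hx (hy hb)) hu

lemma leviPos_filter_eq_invSet (hJ : J ⊆ S.simples)
    {u : EuclideanSpace ℝ (Fin n) ≃ₗ[ℝ] EuclideanSpace ℝ (Fin n)} (hu : u ∈ leviWeyl S J) :
    (leviPos S J).filter (fun a => u a ∉ leviPos S J) = invSet S u := by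
  have hroots := mapsTo_roots_of_mem_weyl (leviWeyl_le_weyl hu)
  ext a
  simp only [Finset.mem_filter, leviPos, Finset.mem_inter]
  constructor
  · rintro ⟨⟨ha, haL⟩, h⟩
    exact (mem_invSet_iff hroots ha).mpr fun hua =>
      h ⟨hua, mapsTo_leviRoots_of_mem_leviWeyl hu haL⟩
  · intro h
    have ha : a ∈ S.pos := Finset.mem_of_mem_filter a h
    have hua : u a ∉ S.pos := (mem_invSet_iff hroots ha).mp h
    have haL : a ∈ leviRoots S J := by
      by_contra haL
      exact hua (Finset.mem_sdiff.mp
        (mapsTo_pos_sdiff_leviRoots_of_mem_leviWeyl hJ hu (Finset.mem_sdiff.mpr ⟨ha, haL⟩))).1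
    exact ⟨⟨ha, haL⟩, fun h' => hua h'.1⟩

lemma prod_leviPos_comp_symm {M : Type*} [CommMonoid M] (hJ : J ⊆ S.simples)
    {u : EuclideanSpace ℝ (Fin n) ≃ₗ[ℝ] EuclideanSpace ℝ (Fin n)} (hu : u ∈ leviWeyl S J)
    (F : EuclideanSpace ℝ (Fin n) → M) :
    ∏ a ∈ leviPos S J, F (u.symm a) =
      (∏ a ∈ leviPos S J \ invSet S u, F a) * ∏ a ∈ invSet S u, F (-a) := by
  have hpm : ∀ w ∈ leviWeyl S J, ∀ a ∈ leviPos S J, w a ∈ leviPos S J ∨ -w a ∈ leviPos S J := by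
    intro w hw a ha
    obtain ⟨hap, haL⟩ := Finset.mem_inter.mp ha
    have hwaL := mapsTo_leviRoots_of_mem_leviWeyl hw haL
    have hwaL' : -w a ∈ leviRoots S J := Finset.mem_filter.mpr
      ⟨neg_mem_roots (Finset.mem_filter.mp hwaL).1,
        Submodule.neg_mem _ (Finset.mem_filter.mp hwaL).2⟩
    exact (mem_pos_or_neg_mem_pos (Finset.mem_filter.mp hwaL).1).imp
      (fun h => Finset.mem_inter.mpr ⟨h, hwaL⟩) (fun h => Finset.mem_inter.mpr ⟨h, hwaL'⟩)
  exact Finset.prod_comp_symm_eq_prod_sdiff_mul_prod_neg u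
    (fun a ha h => S.pos_neg_disj a (Finset.mem_inter.mp ha).1 (Finset.mem_inter.mp h).1)
    (hpm u hu) (hpm _ (inv_mem hu)) (leviPos_filter_eq_invSet hJ hu) F

lemma cfunLevi_cpx_mul (hJ : J ⊆ S.simples)
    {u d : EuclideanSpace ℝ (Fin n) ≃ₗ[ℝ] EuclideanSpace ℝ (Fin n)} (hu : u ∈ leviWeyl S J)
    (hd : d ∈ S.weyl) (l : Fin n → ℂ) :
    cfunLevi S J (cpx (u * d) l) =
      (∏ a ∈ invSet S u, (ev (co (d.symm a)) l - 1) / ev (co (d.symm a)) l) *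
      ∏ a ∈ leviPos S J \ invSet S u, (ev (co (d.symm a)) l + 1) / ev (co (d.symm a)) l := by
  have hsymm : ∀ a, (u * d).symm a = d.symm (u.symm a) := fun _ => rfl
  have hneg : ∀ a, (ev (co (d.symm (-a))) l + 1) / ev (co (d.symm (-a))) l =
      (ev (co (d.symm a)) l - 1) / ev (co (d.symm a)) l := fun a => by
    rw [map_neg, co_neg, ev_neg, ← neg_div_neg_eq, neg_neg, neg_add, neg_neg, ← sub_eq_add_neg]
  simp only [cfunLevi, ev_co_cpx (mul_mem (leviWeyl_le_weyl hu) hd), hsymm]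
  rw [prod_leviPos_comp_symm hJ hu fun a => (ev (co (d.symm a)) l + 1) / ev (co (d.symm a)) l,
    mul_comm]
  simp only [hneg]

theorem statement10_general (n : ℕ) (S : RootData n) (J : Finset (EuclideanSpace ℝ (Fin n)))
    (hJ : J ⊆ S.simples) (ρ : ℂ → ℂ) (hρ : ∀ s : ℂ, ρ s = ρ (1 - s))
    (u d : EuclideanSpace ℝ (Fin n) ≃ₗ[ℝ] EuclideanSpace ℝ (Fin n))
    (hu : u ∈ leviWeyl S J) (hd : d ∈ S.weyl)
    (l : Fin n → ℂ)
    (hρ0 : ∀ a ∈ S.roots, ρ (ev (co a) l) ≠ 0) :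
    cfunLevi S J (cpx (u * d) l) * (rfun S ρ (cpx (u * d) l) / rfun S ρ l) =
      (∏ a ∈ (invSet S u).image (fun b => d.symm b), (ev (co a) l - 1) / ev (co a) l) *
      (∏ a ∈ (leviPos S J \ invSet S u).image (fun b => d.symm b),
          (ev (co a) l + 1) / ev (co a) l) *
      (∏ a ∈ invSet S (u * d), ρ (ev (co a) l + 1) / ρ (ev (co a) l)) := by
  rw [cfunLevi_cpx_mul hJ hu hd,
    rfun_cpx_div_rfun (mul_mem (leviWeyl_le_weyl hu) hd) hρ l fun a ha => hρ0 a (S.pos_subset ha),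
    Finset.prod_image fun _ _ _ _ h => d.symm.injective h,
    Finset.prod_image fun _ _ _ _ h => d.symm.injective h]

/-- for every `u ∈ W'`, every `d ∈ W` and every `λ ∈ V_ℂ` such that
`α̂(λ) ≠ 0` and `ρ(α̂(λ)) ≠ 0` for every coroot `α̂ ∈ R̂`, one has
`c'(udλ)·r(udλ)/r(λ) = ∏_{α̂ ∈ d⁻¹(R̂(u))} (α̂(λ)−1)/α̂(λ)
  · ∏_{β̂ ∈ d⁻¹(R̂'₊∖R̂(u))} (β̂(λ)+1)/β̂(λ) · ∏_{γ̂ ∈ R̂(ud)} ρ(γ̂(λ)+1)/ρ(γ̂(λ))`. -/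
theorem statement10 (n : ℕ) (S : RootData n) (J : Finset (EuclideanSpace ℝ (Fin n)))
    (hJ : J ⊆ S.simples) (ρ : ℂ → ℂ) (hρ : ∀ s : ℂ, ρ s = ρ (1 - s))
    (u d : EuclideanSpace ℝ (Fin n) ≃ₗ[ℝ] EuclideanSpace ℝ (Fin n))
    (hu : u ∈ leviWeyl S J) (hd : d ∈ S.weyl)
    (l : Fin n → ℂ)
    (h0 : ∀ a ∈ S.roots, ev (co a) l ≠ 0)
    (hρ0 : ∀ a ∈ S.roots, ρ (ev (co a) l) ≠ 0) :
    cfunLevi S J (cpx (u * d) l) * (rfun S ρ (cpx (u * d) l) / rfun S ρ l) =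
      (∏ a ∈ (invSet S u).image (fun b => d.symm b), (ev (co a) l - 1) / ev (co a) l) *
      (∏ a ∈ (leviPos S J \ invSet S u).image (fun b => d.symm b),
          (ev (co a) l + 1) / ev (co a) l) *
      (∏ a ∈ invSet S (u * d), ρ (ev (co a) l + 1) / ρ (ev (co a) l)) :=
  statement10_general n S J hJ ρ hρ u d hu hd l hρ0

end RootData
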